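/- arXiv:0807.0147 — 4 statements merged into one kernel-verified Lean document; each statement's English description precedes it below -/
import Mathlib

section
/- Let f : ℕ → ℕ with f(n) ≥ 2 for all n. Define the colouring c on nonempty finite sequences s (with s(i) < f(i)) by c(s) = 0 iff s(|s|−1) < ⌊f(|s|−1)/2⌋. If T is a subtree of the tree of f-bounded finite sequences and F is a finite set of levels on which T is homogeneous for c (i.e., c is constant on T(n) for each n ∈ F), then |T(max(F)+1)| / ∏_{i < max(F)+1} f(i) ≤ (2/3)^{|F|}. -/
/-
Every element of level `n + 1` of a subtree is an element of level `n` followed by one more entry,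
so `|T(n+1)| ≤ |T(n)| · k` whenever the last entries of `T(n+1)` lie in a set of `k` values.
On a level `n + 1 ∈ F` the colouring is constant, so those last entries all lie below `⌊f n / 2⌋`,
or all lie in `[⌊f n / 2⌋, f n)`; either way there are at most `⌈f n / 2⌉ ≤ (2/3) f n` of them,
using `f n ≥ 2`. Multiplying over the levels `1, …, max F + 1`, each (positive) level of `F`
contributes a factor `2/3`.
-/

/-- `T` is a subtree of the tree `seq f` of all `f`-bounded finite sequences:
every element is `f`-bounded and `T` is closed under initial segments. -/
def IsSubtree (f : ℕ → ℕ) (T : Set (List ℕ)) : Prop :=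
  (∀ t ∈ T, ∀ i, i < t.length → t.getD i 0 < f i) ∧
  (∀ t ∈ T, ∀ n, t.take n ∈ T)

/-- The `n`-th level of a tree: its elements of length `n`. -/
def treeLevel (T : Set (List ℕ)) (n : ℕ) : Set (List ℕ) := {t ∈ T | t.length = n}

lemma List.dropLast_append_getD_of_length_eq_succ {α : Type*} {t : List α} {n : ℕ} (d : α)
    (ht : t.length = n + 1) : t.dropLast ++ [t.getD n d] = t := by
  have hne : t ≠ [] := List.ne_nil_of_length_eq_add_one ht
  have hlast : t.getD n d = t.getLast hne := by
    rw [List.getLast_eq_getElem, List.getD_eq_getElem t d (by omega)]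
    congr 1
    omega
  rw [hlast, List.dropLast_append_getLast]

lemma Nat.three_mul_add_one_div_two_le {m : ℕ} (hm : 2 ≤ m) : 3 * ((m + 1) / 2) ≤ 2 * m := by
  omega

lemma Finset.prod_range_ite_add_one_mem {M : Type*} [CommMonoid M] {F : Finset ℕ} {N : ℕ}
    (hF : ∀ n ∈ F, 0 < n ∧ n ≤ N) (a : M) :
    ∏ i ∈ range N, (if i + 1 ∈ F then a else 1) = a ^ F.card := by
  rw [prod_ite, prod_const, prod_const_one, mul_one]
  congr 1
  apply card_nbij' (· + 1) (· - 1)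
  · intro i hi
    exact (mem_filter.mp hi).2
  · intro n hn
    have := hF n hn
    simp only [coe_filter, mem_range, Set.mem_ofPred_eq]
    exact ⟨by omega, by rwa [Nat.sub_add_cancel this.1]⟩
  · intro i _
    simp
  · intro n hn
    simp only [Nat.sub_add_cancel (hF n hn).1]

namespace IsSubtree

variable {f : ℕ → ℕ} {T : Set (List ℕ)}

lemma getD_lt_of_mem_treeLevel_succ (hT : IsSubtree f T) {n : ℕ} {t : List ℕ}
    (ht : t ∈ treeLevel T (n + 1)) : t.getD n 0 < f n :=
  hT.1 t ht.1 n (by rw [ht.2]; omega)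

lemma dropLast_mem_treeLevel (hT : IsSubtree f T) {n : ℕ} {t : List ℕ}
    (ht : t ∈ treeLevel T (n + 1)) : t.dropLast ∈ treeLevel T n := by
  have htake : t.dropLast = t.take n := by
    rw [List.dropLast_eq_take, ht.2, Nat.add_sub_cancel]
  exact ⟨htake ▸ hT.2 t ht.1 n, by rw [List.length_dropLast, ht.2, Nat.add_sub_cancel]⟩

lemma treeLevel_succ_subset_image (hT : IsSubtree f T) {n : ℕ} {s : Set ℕ}
    (hs : ∀ t ∈ treeLevel T (n + 1), t.getD n 0 ∈ s) :
    treeLevel T (n + 1) ⊆ (fun p : List ℕ × ℕ => p.1 ++ [p.2]) '' (treeLevel T n ×ˢ s) :=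
  fun t ht => ⟨(t.dropLast, t.getD n 0), ⟨hT.dropLast_mem_treeLevel ht, hs t ht⟩,
    List.dropLast_append_getD_of_length_eq_succ 0 ht.2⟩

lemma encard_treeLevel_le_prod (hT : IsSubtree f T) (b : ℕ → ℕ)
    (hb : ∀ n, ∃ s : Finset ℕ, s.card ≤ b n ∧ ∀ t ∈ treeLevel T (n + 1), t.getD n 0 ∈ s)
    (n : ℕ) : (treeLevel T n).encard ≤ ∏ i ∈ Finset.range n, (b i : ℕ∞) := by
  induction n with
  | zero =>
    have hsub : treeLevel T 0 ⊆ {[]} := fun t ht => List.eq_nil_of_length_eq_zero ht.2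
    simpa using Set.encard_le_encard hsub
  | succ n ih =>
    obtain ⟨s, hcard, hs⟩ := hb n
    calc (treeLevel T (n + 1)).encard
        ≤ ((fun p : List ℕ × ℕ => p.1 ++ [p.2]) '' (treeLevel T n ×ˢ ↑s)).encard :=
          Set.encard_le_encard (hT.treeLevel_succ_subset_image hs)
      _ ≤ (treeLevel T n).encard * s.card := by
          rw [← Set.encard_coe_eq_coe_finsetCard, ← Set.encard_prod]
          exact Set.encard_image_le _ _
      _ ≤ (∏ i ∈ Finset.range n, (b i : ℕ∞)) * b n := by gcongr
      _ = ∏ i ∈ Finset.range (n + 1), (b i : ℕ∞) := (Finset.prod_range_succ _ n).symm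

lemma ncard_treeLevel_le_prod (hT : IsSubtree f T) (b : ℕ → ℕ)
    (hb : ∀ n, ∃ s : Finset ℕ, s.card ≤ b n ∧ ∀ t ∈ treeLevel T (n + 1), t.getD n 0 ∈ s)
    (n : ℕ) : (treeLevel T n).ncard ≤ ∏ i ∈ Finset.range n, b i :=
  ENat.toNat_le_of_le_natCast (by exact_mod_cast hT.encard_treeLevel_le_prod b hb n)

lemma exists_finset_getD_mem_of_homogeneous (hT : IsSubtree f T) {c : List ℕ → Fin 2}
    (hc : ∀ s : List ℕ, s ≠ [] →
      (c s = 0 ↔ s.getD (s.length - 1) 0 < f (s.length - 1) / 2))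
    {n : ℕ} {ε : Fin 2} (hε : ∀ t ∈ treeLevel T (n + 1), c t = ε) :
    ∃ s : Finset ℕ, s.card ≤ (f n + 1) / 2 ∧ ∀ t ∈ treeLevel T (n + 1), t.getD n 0 ∈ s := by
  have hlast : ∀ t ∈ treeLevel T (n + 1), (c t = 0 ↔ t.getD n 0 < f n / 2) := fun t ht => by
    simpa [ht.2] using hc t (List.ne_nil_of_length_eq_add_one ht.2)
  fin_cases ε
  · refine ⟨Finset.range (f n / 2), by rw [Finset.card_range]; omega, fun t ht => ?_⟩
    exact Finset.mem_range.mpr ((hlast t ht).mp (hε t ht))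
  · refine ⟨Finset.Ico (f n / 2) (f n), by rw [Nat.card_Ico]; omega, fun t ht => ?_⟩
    have hge : ¬ t.getD n 0 < f n / 2 := fun h => by
      simpa [hε t ht] using (hlast t ht).mpr h
    exact Finset.mem_Ico.mpr ⟨by omega, hT.getD_lt_of_mem_treeLevel_succ ht⟩

end IsSubtree

theorem stmt0 (f : ℕ → ℕ) (hf : ∀ n, 2 ≤ f n)
    (c : List ℕ → Fin 2)
    (hc : ∀ s : List ℕ, s ≠ [] →
      (c s = 0 ↔ s.getD (s.length - 1) 0 < f (s.length - 1) / 2))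
    (T : Set (List ℕ)) (hT : IsSubtree f T)
    (F : Finset ℕ) (hFne : F.Nonempty) (hFpos : ∀ n ∈ F, 0 < n)
    (hhom : ∀ n ∈ F, ∃ ε : Fin 2, ∀ t ∈ treeLevel T n, c t = ε) :
    ((treeLevel T (F.max' hFne + 1)).ncard : ℝ) /
        ∏ i ∈ Finset.range (F.max' hFne + 1), (f i : ℝ)
      ≤ (2 / 3 : ℝ) ^ F.card := by
  set N := F.max' hFne + 1
  set b : ℕ → ℕ := fun i => if i + 1 ∈ F then (f i + 1) / 2 else f i
  have hcount : (treeLevel T N).ncard ≤ ∏ i ∈ Finset.range N, b i := by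
    refine hT.ncard_treeLevel_le_prod b (fun n => ?_) N
    by_cases hn : n + 1 ∈ F
    · obtain ⟨ε, hε⟩ := hhom (n + 1) hn
      simpa [b, hn] using hT.exists_finset_getD_mem_of_homogeneous hc hε
    · exact ⟨Finset.range (f n), by simp [b, hn],
        fun t ht => Finset.mem_range.mpr (hT.getD_lt_of_mem_treeLevel_succ ht)⟩
  have hb : ∀ i, (b i : ℝ) ≤ (if i + 1 ∈ F then 2 / 3 else 1) * f i := fun i => by
    by_cases hi : i + 1 ∈ F
    · have h := Nat.three_mul_add_one_div_two_le (hf i)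
      simp only [b, hi, if_true]
      have h' : (3 : ℝ) * ((f i + 1) / 2 : ℕ) ≤ 2 * f i := by exact_mod_cast h
      linarith
    · simp [b, hi]
  have hFle : ∀ n ∈ F, 0 < n ∧ n ≤ N := fun n hn =>
    ⟨hFpos n hn, (F.le_max' n hn).trans (Nat.le_succ _)⟩
  rw [div_le_iff₀ (Finset.prod_pos fun i _ => by have := hf i; positivity)]
  calc ((treeLevel T N).ncard : ℝ) ≤ ∏ i ∈ Finset.range N, (b i : ℝ) := by exact_mod_cast hcount
    _ ≤ ∏ i ∈ Finset.range N, (if i + 1 ∈ F then 2 / 3 else 1) * (f i : ℝ) :=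
        Finset.prod_le_prod (fun i _ => by positivity) fun i _ => hb i
    _ = (2 / 3 : ℝ) ^ F.card * ∏ i ∈ Finset.range N, (f i : ℝ) := by
        rw [Finset.prod_mul_distrib, Finset.prod_range_ite_add_one_mem hFle]
end

section
/- Let f : ℕ → ℕ with f(n) ≥ 2 for all n. There exists a colouring c : seq(f) → {0,1} such that for every subtree T of seq(f), either T(n) is homogeneous for c for only finitely many n, or μ_f([T]) = 0, where μ_f is the Haar (product uniform) probability measure on ∏_n {0,…,f(n)−1} and [T] is the set of branches of T. -/
/-!
Colour a node by the parity of its last entry. If level `n + 1` of `T` is homogeneous, every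
node of level `n` has at most `⌈f n / 2⌉ ≤ 2 f n / 3` children in `T`. Hence the proportion
`|T(n)| / ∏_{i<n} f i` of nodes of `seq f` lying in `T`, which bounds `μ_f [T]` from above, never
increases and drops by the factor `2/3` at every homogeneous level; infinitely many such levels
force `μ_f [T] = 0`.
-/

open Finset MeasureTheory Filter
open scoped ENNReal

theorem ENNReal.eq_zero_of_le_of_frequently_le_mul {a : ℕ → ℝ≥0∞} {x r : ℝ≥0∞}
    (ha : Antitone a) (ha₀ : a 0 ≠ ∞) (hr : r < 1)
    (hfreq : ∃ᶠ n in atTop, a (n + 1) ≤ r * a n) (hx : ∀ n, x ≤ a n) : x = 0 := by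
  have hpow : ∀ k, ∃ n, a n ≤ r ^ k * a 0 := by
    intro k
    induction k with
    | zero => exact ⟨0, by simp⟩
    | succ k ih =>
      obtain ⟨n, hn⟩ := ih
      obtain ⟨m, hnm, hm⟩ := frequently_atTop.1 hfreq n
      refine ⟨m + 1, ?_⟩
      calc a (m + 1) ≤ r * a m := hm
        _ ≤ r * (r ^ k * a 0) := by gcongr; exact (ha hnm).trans hn
        _ = r ^ (k + 1) * a 0 := by rw [pow_succ', mul_assoc]
  have hlim : Tendsto (fun k => r ^ k * a 0) atTop (nhds 0) := by
    simpa using ENNReal.Tendsto.mul_const (ENNReal.tendsto_pow_atTop_nhds_zero_of_lt_one hr)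
      (Or.inr ha₀)
  refine nonpos_iff_eq_zero.1 (ge_of_tendsto' hlim fun k => ?_)
  obtain ⟨n, hn⟩ := hpow k
  exact (hx n).trans hn

theorem card_filter_mod_two_eq_le (m e : ℕ) :
    #{a : Fin m | (a : ℕ) % 2 = e} ≤ (m + 1) / 2 := by
  simpa using card_le_card_of_injOn (t := range ((m + 1) / 2)) (fun a : Fin m => (a : ℕ) / 2)
    (fun a _ => mem_coe.2 (mem_range.2 (by have := a.isLt; dsimp only; omega)))
    (fun a ha b hb hab => by
      simp only [coe_filter, mem_univ, true_and, Set.mem_ofPred_eq] at ha hb hab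
      exact Fin.ext (by omega))

theorem ENNReal.natCast_half_succ_div_le {m : ℕ} (hm : 2 ≤ m) :
    (((m + 1) / 2 : ℕ) : ℝ≥0∞) / m ≤ 2 / 3 := by
  refine ENNReal.div_le_of_le_mul ?_
  rw [← ENNReal.mul_div_right_comm, ENNReal.le_div_iff_mul_le (by simp) (by simp)]
  exact_mod_cast (by omega : (m + 1) / 2 * 3 ≤ 2 * m)

def lastParity (t : List ℕ) : Fin 2 := ⟨t.getLastD 0 % 2, Nat.mod_lt _ two_pos⟩

theorem lastParity_ofFn {n : ℕ} (s : Fin (n + 1) → ℕ) :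
    lastParity (List.ofFn s) = ⟨s (Fin.last n) % 2, Nat.mod_lt _ two_pos⟩ := by
  rw [List.ofFn_succ', List.concat_eq_append]
  simp only [lastParity, List.getLastD_concat]

section Levels

variable {f : ℕ → ℕ} {T : Set (List ℕ)} {n : ℕ}

open Classical in
/-- The `n`-th level of `T`, as a set of `f`-bounded tuples. -/
noncomputable def levelTuples (f : ℕ → ℕ) (T : Set (List ℕ)) (n : ℕ) :
    Finset ((i : Fin n) → Fin (f i)) :=
  {s | List.ofFn (fun i => (s i : ℕ)) ∈ T}

theorem mem_levelTuples {s : (i : Fin n) → Fin (f i)} :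
    s ∈ levelTuples f T n ↔ List.ofFn (fun i => (s i : ℕ)) ∈ T := by
  simp [levelTuples]

theorem init_mem_levelTuples (hT : IsSubtree f T) {s : (i : Fin (n + 1)) → Fin (f i)}
    (hs : s ∈ levelTuples f T (n + 1)) : Fin.init s ∈ levelTuples f T n := by
  rw [mem_levelTuples] at hs ⊢
  have htake : List.ofFn (fun i => (Fin.init s i : ℕ)) =
      (List.ofFn (fun i => (s i : ℕ))).take n := by
    rw [List.ofFn_succ', List.concat_eq_append, List.take_append_of_le_length (by simp)]
    simp [Fin.init]
  exact htake ▸ hT.2 _ hs n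

theorem card_levelTuples_succ_le (hT : IsSubtree f T) (E : Finset (Fin (f n)))
    (hE : ∀ s ∈ levelTuples f T (n + 1), s (Fin.last n) ∈ E) :
    #(levelTuples f T (n + 1)) ≤ #(levelTuples f T n) * #E := by
  rw [← card_product]
  refine card_le_card_of_injOn (fun s => (Fin.init s, s (Fin.last n)))
    (fun s hs => mem_product.2 ⟨init_mem_levelTuples hT hs, hE s hs⟩) fun s _ t _ hst => ?_
  rw [← Fin.snoc_init_self s, ← Fin.snoc_init_self t]
  simp only [Prod.mk.injEq] at hst
  rw [hst.1, hst.2]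

theorem card_levelTuples_succ_le_of_forall_lastParity_eq (hT : IsSubtree f T) {ε : Fin 2}
    (hε : ∀ t ∈ treeLevel T (n + 1), lastParity t = ε) :
    #(levelTuples f T (n + 1)) ≤ #(levelTuples f T n) * ((f n + 1) / 2) := by
  refine (card_levelTuples_succ_le hT {a | (a : ℕ) % 2 = ε} fun s hs => ?_).trans
    (Nat.mul_le_mul_left _ (card_filter_mod_two_eq_le _ _))
  have hlevel : List.ofFn (fun i => (s i : ℕ)) ∈ treeLevel T (n + 1) :=
    ⟨mem_levelTuples.1 hs, List.length_ofFn⟩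
  have := congrArg Fin.val (hε _ hlevel)
  rw [lastParity_ofFn] at this
  simpa using this

noncomputable def levelDensity (f : ℕ → ℕ) (T : Set (List ℕ)) (n : ℕ) : ℝ≥0∞ :=
  #(levelTuples f T n) * (∏ i ∈ range n, (f i : ℝ≥0∞))⁻¹

theorem levelDensity_zero_ne_top : levelDensity f T 0 ≠ ∞ := by
  simp [levelDensity]

theorem levelDensity_succ_le {k : ℕ} (hk : #(levelTuples f T (n + 1)) ≤ #(levelTuples f T n) * k) :
    levelDensity f T (n + 1) ≤ k / f n * levelDensity f T n := by
  rw [levelDensity, prod_range_succ, ENNReal.mul_inv (Or.inr (by simp))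
    (Or.inl (ENNReal.prod_ne_top fun _ _ => ENNReal.natCast_ne_top _)),
    levelDensity, ENNReal.div_eq_inv_mul]
  calc (#(levelTuples f T (n + 1)) : ℝ≥0∞) * ((∏ i ∈ range n, (f i : ℝ≥0∞))⁻¹ * (f n : ℝ≥0∞)⁻¹)
      ≤ (#(levelTuples f T n) * k : ℕ) * ((∏ i ∈ range n, (f i : ℝ≥0∞))⁻¹ * (f n : ℝ≥0∞)⁻¹) := by
        gcongr
    _ = _ := by push_cast; ring

theorem levelDensity_antitone (hT : IsSubtree f T) (hf : ∀ n, f n ≠ 0) :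
    Antitone (levelDensity f T) := by
  refine antitone_nat_of_succ_le fun n => ?_
  have hcard : #(levelTuples f T (n + 1)) ≤ #(levelTuples f T n) * f n := by
    simpa using card_levelTuples_succ_le hT univ fun s _ => mem_univ _
  simpa [ENNReal.div_self (Nat.cast_ne_zero.2 (hf n))] using levelDensity_succ_le hcard

theorem levelDensity_succ_le_of_forall_lastParity_eq (hT : IsSubtree f T) (hfn : 2 ≤ f n)
    {ε : Fin 2} (hε : ∀ t ∈ treeLevel T (n + 1), lastParity t = ε) :
    levelDensity f T (n + 1) ≤ 2 / 3 * levelDensity f T n :=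
  (levelDensity_succ_le (card_levelTuples_succ_le_of_forall_lastParity_eq hT hε)).trans
    (by gcongr ?_ * _; exact ENNReal.natCast_half_succ_div_le hfn)

theorem measure_ofFn_mem_le_levelDensity (μ : Measure ((n : ℕ) → Fin (f n)))
    (hμ : ∀ (n : ℕ) (s : (i : Fin n) → Fin (f i)),
      μ {x | ∀ i : Fin n, x i = s i} = (∏ i ∈ range n, (f i : ℝ≥0∞))⁻¹) :
    μ {x | List.ofFn (fun i : Fin n => (x i : ℕ)) ∈ T} ≤ levelDensity f T n := by
  have hcover : {x : (n : ℕ) → Fin (f n) | List.ofFn (fun i : Fin n => (x i : ℕ)) ∈ T}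
      ⊆ ⋃ s ∈ levelTuples f T n, {x | ∀ i : Fin n, x i = s i} :=
    fun x hx => Set.mem_iUnion₂.2 ⟨fun i => x i, mem_levelTuples.2 hx, fun _ => rfl⟩
  calc μ _ ≤ μ (⋃ s ∈ levelTuples f T n, {x | ∀ i : Fin n, x i = s i}) := measure_mono hcover
    _ ≤ ∑ s ∈ levelTuples f T n, μ {x | ∀ i : Fin n, x i = s i} :=
        measure_biUnion_finset_le _ _
    _ = levelDensity f T n := by simp [hμ, levelDensity]

end Levels

theorem stmt1_general (f : ℕ → ℕ) (hf : ∀ n, 2 ≤ f n)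
    (μ : MeasureTheory.Measure ((n : ℕ) → Fin (f n)))
    (hμ : ∀ (n : ℕ) (s : (i : Fin n) → Fin (f i)),
      μ {x | ∀ i : Fin n, x i = s i} = (∏ i ∈ Finset.range n, (f i : ENNReal))⁻¹) :
    ∃ c : List ℕ → Fin 2,
      ∀ T : Set (List ℕ), IsSubtree f T →
        {n : ℕ | ∃ ε : Fin 2, ∀ t ∈ treeLevel T n, c t = ε}.Finite ∨
        μ {x | ∀ n : ℕ, List.ofFn (fun i : Fin n => ((x i : ℕ))) ∈ T} = 0 := by
  refine ⟨lastParity, fun T hT => or_iff_not_imp_left.2 fun hinf => ?_⟩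
  have hfreq : ∃ᶠ n in atTop, levelDensity f T (n + 1) ≤ 2 / 3 * levelDensity f T n := by
    have hhom := Nat.frequently_atTop_iff_infinite.2 hinf
    rw [← map_add_atTop_eq_nat 1, frequently_map] at hhom
    exact hhom.mono fun n ⟨_, hε⟩ => levelDensity_succ_le_of_forall_lastParity_eq hT (hf n) hε
  refine ENNReal.eq_zero_of_le_of_frequently_le_mul
    (levelDensity_antitone hT fun n => by have := hf n; omega) levelDensity_zero_ne_top
    (ENNReal.div_lt_of_lt_mul (by norm_num)) hfreq fun n => ?_
  exact (measure_mono (Set.ofPred_subset_ofPred.2 fun _ hx => hx n)).trans (measure_ofFn_mem_le_levelDensity μ hμ)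

/-- There is a colouring `c` of `seq f` such that every subtree `T` either has only
finitely many levels homogeneous for `c`, or its set of branches `[T]` is
`μ_f`-null, where `μ_f` is the Haar (product uniform) probability measure,
characterized by its values on cylinders. -/
theorem stmt1 (f : ℕ → ℕ) (hf : ∀ n, 2 ≤ f n)
    (μ : MeasureTheory.Measure ((n : ℕ) → Fin (f n)))
    (hprob : MeasureTheory.IsProbabilityMeasure μ)
    (hμ : ∀ (n : ℕ) (s : (i : Fin n) → Fin (f i)),
      μ {x | ∀ i : Fin n, x i = s i} = (∏ i ∈ Finset.range n, (f i : ENNReal))⁻¹) :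
    ∃ c : List ℕ → Fin 2,
      ∀ T : Set (List ℕ), IsSubtree f T →
        {n : ℕ | ∃ ε : Fin 2, ∀ t ∈ treeLevel T n, c t = ε}.Finite ∨
        μ {x | ∀ n : ℕ, List.ofFn (fun i : Fin n => ((x i : ℕ))) ∈ T} = 0 :=
  stmt1_general f hf μ hμ
end

section
/- Let 𝓗 be a family of functions τ : [0,∞) → [0,∞) such that every τ ∈ 𝓗 is concave, nondecreasing, satisfies lim_{x→∞} τ(x) = ∞ and τ(x) = O(x), and such that for every τ ∈ 𝓗 there is σ ∈ 𝓗 with σ ∘ σ = τ. Define g ≤_τ h iff liminf_{n→∞} h(n)/τ(g(n)) > 0, and g ≤_𝓗 h iff g ≤_τ h for all τ ∈ 𝓗. Then ≤_𝓗 is a quasi-ordering (reflexive and transitive) on the set of functions g : ℕ → ℕ with lim_{n→∞} g(n) = ∞. -/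
/-- `g ≤_τ h` iff `liminf_n h(n)/τ(g(n)) > 0` (computed in `ℝ≥0∞`). -/
def LeTau (τ : ℝ → ℝ) (g h : ℕ → ℕ) : Prop :=
  0 < Filter.liminf (fun n => (h n : ENNReal) / ENNReal.ofReal (τ (g n))) Filter.atTop

/-- `g ≤_𝓗 h` iff `g ≤_τ h` for all `τ ∈ 𝓗`. -/
def LeFam (H : Set (ℝ → ℝ)) (g h : ℕ → ℕ) : Prop := ∀ τ ∈ H, LeTau τ g h

/-!
For a single `τ`, `g ≤_τ h` just says `c · τ(g n) ≤ h n` eventually, for some `c > 0`.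
Reflexivity is then the bound `τ(x) ≤ C x`. For transitivity, write `τ = σ ∘ σ`: from
`c₁ σ(g n) ≤ h n` and `c₂ σ(h n) ≤ k n` with `c₁ ≤ 1`, concavity and monotonicity of `σ` give
`c₁ τ(g n) ≤ σ(c₁ σ(g n)) ≤ σ(h n)`, hence `c₂ c₁ τ(g n) ≤ k n`.
-/

open Filter ENNReal Set

theorem ConcaveOn.mul_le_apply_mul {f : ℝ → ℝ} (hf : ConcaveOn ℝ (Ici 0) f) (h₀ : 0 ≤ f 0)
    {c x : ℝ} (hc₀ : 0 ≤ c) (hc₁ : c ≤ 1) (hx : 0 ≤ x) : c * f x ≤ f (c * x) := by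
  have h := hf.2 (mem_Ici.mpr hx) (mem_Ici.mpr le_rfl) hc₀ (sub_nonneg.mpr hc₁) (by ring)
  simp only [smul_eq_mul, mul_zero, add_zero] at h
  nlinarith

theorem LeTau.exists_mul_le {τ : ℝ → ℝ} {g h : ℕ → ℕ} (hgh : LeTau τ g h) :
    ∃ c ∈ Ioc (0 : ℝ) 1, ∀ᶠ n in atTop, c * τ (g n) ≤ h n := by
  obtain ⟨a, ha₀, ha⟩ := exists_between hgh
  set b := min a 1
  have hb_top : b ≠ ⊤ := ne_top_of_le_ne_top one_ne_top (min_le_right _ _)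
  have hb₀ : 0 < b := lt_min ha₀ one_pos
  refine ⟨b.toReal, ⟨toReal_pos hb₀.ne' hb_top, toReal_le_of_le_ofReal zero_le_one
    (ofReal_one ▸ min_le_right a 1)⟩, ?_⟩
  filter_upwards [eventually_lt_of_lt_liminf ha] with n hn
  have hmul : b * ENNReal.ofReal (τ (g n)) ≤ h n :=
    mul_le_of_le_div ((min_le_left _ _).trans hn.le)
  calc b.toReal * τ (g n) ≤ b.toReal * max (τ (g n)) 0 := by gcongr; exact le_max_left _ _
    _ = (b * ENNReal.ofReal (τ (g n))).toReal := by rw [toReal_mul, toReal_ofReal']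
    _ ≤ h n := by simpa using toReal_mono (natCast_ne_top _) hmul

-- `h n ≠ 0` is needed because `0 / 0 = 0` in `ℝ≥0∞`.
theorem leTau_of_eventually_mul_le {τ : ℝ → ℝ} {g h : ℕ → ℕ} (hh : ∀ᶠ n in atTop, h n ≠ 0)
    {c : ℝ} (hc : 0 < c) (hle : ∀ᶠ n in atTop, c * τ (g n) ≤ h n) : LeTau τ g h := by
  refine (ofReal_pos.mpr hc).trans_le (le_liminf_of_le (by isBoundedDefault) ?_)
  filter_upwards [hh, hle] with n hn hle
  rw [ENNReal.le_div_iff_mul_le (Or.inr (Nat.cast_ne_zero.mpr hn)) (Or.inl ofReal_ne_top),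
    ← ofReal_mul hc.le, ← ofReal_natCast]
  exact ofReal_le_ofReal hle

theorem leTau_self {τ : ℝ → ℝ} {g : ℕ → ℕ} (hτ : ∃ C > (0 : ℝ), ∀ᶠ x in atTop, τ x ≤ C * x)
    (hg : Tendsto g atTop atTop) : LeTau τ g g := by
  obtain ⟨C, hC, hτC⟩ := hτ
  refine leTau_of_eventually_mul_le (hg.eventually_ne_atTop 0) (inv_pos.mpr hC) ?_
  filter_upwards [(tendsto_natCast_atTop_atTop.comp hg).eventually hτC] with n hn
  calc C⁻¹ * τ (g n) ≤ C⁻¹ * (C * g n) := by gcongr; exact hn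
    _ = g n := inv_mul_cancel_left₀ hC.ne' _

theorem LeTau.trans_of_comp_self_eq {σ τ : ℝ → ℝ} {g h k : ℕ → ℕ}
    (hconc : ConcaveOn ℝ (Ici 0) σ) (hmono : MonotoneOn σ (Ici 0))
    (hnonneg : ∀ x : ℝ, 0 ≤ x → 0 ≤ σ x) (hστ : ∀ x : ℝ, 0 ≤ x → σ (σ x) = τ x)
    (hk : ∀ᶠ n in atTop, k n ≠ 0) (hgh : LeTau σ g h) (hhk : LeTau σ h k) : LeTau τ g k := by
  obtain ⟨c₁, ⟨hc₁, hc₁_le⟩, h₁⟩ := hgh.exists_mul_le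
  obtain ⟨c₂, ⟨hc₂, -⟩, h₂⟩ := hhk.exists_mul_le
  refine leTau_of_eventually_mul_le hk (mul_pos hc₂ hc₁) ?_
  filter_upwards [h₁, h₂] with n h₁ h₂
  have hσg : 0 ≤ σ (g n) := hnonneg _ (Nat.cast_nonneg _)
  calc c₂ * c₁ * τ (g n) = c₂ * (c₁ * σ (σ (g n))) := by
        rw [hστ _ (Nat.cast_nonneg _)]; ring
    _ ≤ c₂ * σ (c₁ * σ (g n)) := by
        gcongr; exact hconc.mul_le_apply_mul (hnonneg 0 le_rfl) hc₁.le hc₁_le hσg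
    _ ≤ c₂ * σ (h n) := by
        gcongr; exact hmono (mem_Ici.mpr (by positivity)) (mem_Ici.mpr (Nat.cast_nonneg _)) h₁
    _ ≤ k n := h₂

theorem stmt3_general (H : Set (ℝ → ℝ))
    (hconc : ∀ τ ∈ H, ConcaveOn ℝ (Set.Ici 0) τ)
    (hmono : ∀ τ ∈ H, MonotoneOn τ (Set.Ici 0))
    (hnonneg : ∀ τ ∈ H, ∀ x : ℝ, 0 ≤ x → 0 ≤ τ x)
    (hO : ∀ τ ∈ H, ∃ C > (0 : ℝ), ∀ᶠ x in Filter.atTop, τ x ≤ C * x)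
    (hroot : ∀ τ ∈ H, ∃ σ ∈ H, ∀ x : ℝ, 0 ≤ x → σ (σ x) = τ x) :
    (∀ g : ℕ → ℕ, Filter.Tendsto g Filter.atTop Filter.atTop → LeFam H g g) ∧
    (∀ g h k : ℕ → ℕ,
      Filter.Tendsto g Filter.atTop Filter.atTop →
      Filter.Tendsto h Filter.atTop Filter.atTop →
      Filter.Tendsto k Filter.atTop Filter.atTop →
      LeFam H g h → LeFam H h k → LeFam H g k) := by
  refine ⟨fun g hg τ hτ => leTau_self (hO τ hτ) hg, ?_⟩
  intro g h k _ _ hk hgh hhk τ hτ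
  obtain ⟨σ, hσ, hστ⟩ := hroot τ hτ
  exact (hgh σ hσ).trans_of_comp_self_eq (hconc σ hσ) (hmono σ hσ) (hnonneg σ hσ) hστ
    (hk.eventually_ne_atTop 0) (hhk σ hσ)

/-- If `𝓗` is a suitable family (each member concave, nondecreasing, tending to `∞`,
`O(x)`, and `𝓗` closed under taking square roots under composition), then `≤_𝓗`
is reflexive and transitive on the functions `ℕ → ℕ` tending to infinity. -/
theorem stmt3 (H : Set (ℝ → ℝ))
    (hconc : ∀ τ ∈ H, ConcaveOn ℝ (Set.Ici 0) τ)
    (hmono : ∀ τ ∈ H, MonotoneOn τ (Set.Ici 0))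
    (hnonneg : ∀ τ ∈ H, ∀ x : ℝ, 0 ≤ x → 0 ≤ τ x)
    (htop : ∀ τ ∈ H, Filter.Tendsto τ Filter.atTop Filter.atTop)
    (hO : ∀ τ ∈ H, ∃ C > (0 : ℝ), ∀ᶠ x in Filter.atTop, τ x ≤ C * x)
    (hroot : ∀ τ ∈ H, ∃ σ ∈ H, ∀ x : ℝ, 0 ≤ x → σ (σ x) = τ x) :
    (∀ g : ℕ → ℕ, Filter.Tendsto g Filter.atTop Filter.atTop → LeFam H g g) ∧
    (∀ g h k : ℕ → ℕ,
      Filter.Tendsto g Filter.atTop Filter.atTop →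
      Filter.Tendsto h Filter.atTop Filter.atTop →
      Filter.Tendsto k Filter.atTop Filter.atTop →
      LeFam H g h → LeFam H h k → LeFam H g k) :=
  stmt3_general H hconc hmono hnonneg hO hroot
end

section
/- Let 𝒰 be a nonprincipal selective ultrafilter on ℕ, F : ℕ → Set with each F(n) a nonempty finite set, and g : ℕ → ℕ with g(n) ≥ 1 for all n. Define 𝓗 = { A ⊆ ℕ(F) : lim_{n→𝒰} |A(n)|/g(n) = ∞ }, where ℕ(F) = {(n,x) : x ∈ F(n)} and A(n) = {x : (n,x) ∈ A}. If lim_{n→∞} g(n)/|F(n)| = 0, then 𝓗 is a nonempty selective coideal on ℕ(F): ℕ(F) ∈ 𝓗; 𝓗 is upward closed; if A ∪ B ∈ 𝓗 then A ∈ 𝓗 or B ∈ 𝓗; and every decreasing sequence A₀ ⊇ A₁ ⊇ ⋯ of members of 𝓗 has a diagonalization B ∈ 𝓗, meaning B − k ⊆ A_k for every k ∈ dom(B). -/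
/-!
Since the slice ratios `|A k(n)| / g(n)` of each `A k` tend to `∞` along `𝒰`, the sets
`C k = {n | |A j(n)| / g(n) ≥ k for all j ≤ k}` form a decreasing sequence in `𝒰`. A diagonalization
`B₀ ∈ 𝒰` of it satisfies `|A k(n)| / g(n) ≥ k` whenever `k < n` both lie in `B₀`, so keeping over
each `n ∈ B₀` the slice of `A k`, for `k` the element of `B₀` preceding `n`, gives a member of `𝓗`;
it diagonalizes `(A k)` because the sequence decreases. The coideal property holds because
`|(A ∪ B)(n)| ≤ 2 max(|A(n)|, |B(n)|)` and the ultrafilter decides which slice is the larger one.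
-/

open Filter Topology

def IsSelective (U : Ultrafilter ℕ) : Prop :=
  ∀ A : ℕ → Set ℕ, (∀ k, A (k + 1) ⊆ A k) → (∀ k, A k ∈ U) →
    ∃ B ∈ U, ∀ k ∈ B, {n ∈ B | k < n} ⊆ A k

theorem Ultrafilter.le_atTop_of_forall_ne_pure {U : Ultrafilter ℕ} (hU : ∀ a, U ≠ pure a) :
    (U : Filter ℕ) ≤ atTop := by
  rcases U.le_cofinite_or_eq_pure with h | ⟨a, ha⟩
  · rwa [← Nat.cofinite_eq_atTop]
  · exact absurd ha (hU a)

theorem Ultrafilter.tendsto_atTop_or_of_le_add {ι 𝕜 : Type*} [Field 𝕜] [LinearOrder 𝕜]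
    [IsStrictOrderedRing 𝕜] {U : Ultrafilter ι} {u v w : ι → 𝕜}
    (huvw : ∀ i, u i ≤ v i + w i) (hu : Tendsto u U atTop) :
    Tendsto v U atTop ∨ Tendsto w U atTop := by
  have half : Tendsto (fun i => u i / 2) U atTop := hu.atTop_div_const two_pos
  refine (U.eventually_or.mp (Eventually.of_forall fun i => le_total (w i) (v i))).imp
    (fun h => tendsto_atTop_mono' _ ?_ half) (fun h => tendsto_atTop_mono' _ ?_ half)
  · filter_upwards [h] with i hi
    linarith [huvw i]
  · filter_upwards [h] with i hi
    linarith [huvw i]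

theorem tendsto_div_atTop_of_tendsto_div_zero {ι : Type*} {l : Filter ι} {a b : ι → ℝ}
    (hpos : ∀ᶠ i in l, 0 < a i / b i) (h : Tendsto (fun i => a i / b i) l (𝓝 0)) :
    Tendsto (fun i => b i / a i) l atTop := by
  have h' := tendsto_nhdsWithin_of_tendsto_nhds_of_eventually_within _ h hpos
  simpa only [Pi.inv_def, inv_div] using h'.inv_tendsto_nhdsGT_zero

/-- The greatest element of `s` below `n` (`0` if there is none). -/
noncomputable def lastBelow (s : Set ℕ) (n : ℕ) : ℕ :=
  sSup {k ∈ s | k < n}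

section lastBelow

variable {s : Set ℕ} {k n : ℕ}

theorem bddAbove_lastBelow_set (s : Set ℕ) (n : ℕ) : BddAbove {k ∈ s | k < n} :=
  ⟨n, fun _ hk => hk.2.le⟩

theorem le_lastBelow (hk : k ∈ s) (hkn : k < n) : k ≤ lastBelow s n :=
  le_csSup (bddAbove_lastBelow_set s n) ⟨hk, hkn⟩

theorem lastBelow_mem (hk : k ∈ s) (hkn : k < n) : lastBelow s n ∈ s ∧ lastBelow s n < n :=
  Nat.sSup_mem (s := {k ∈ s | k < n}) ⟨k, hk, hkn⟩ (bddAbove_lastBelow_set s n)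

end lastBelow

theorem IsSelective.exists_tendsto_lastBelow {U : Ultrafilter ℕ} (hsel : IsSelective U)
    (hU : (U : Filter ℕ) ≤ atTop) {r : ℕ → ℕ → ℝ} (hr : ∀ k, Tendsto (r k) U atTop) :
    ∃ B ∈ U, Tendsto (fun n => r (lastBelow B n) n) U atTop := by
  set C : ℕ → Set ℕ := fun k => {n | ∀ j ≤ k, (k : ℝ) ≤ r j n}
  have hC : ∀ k, C k ∈ U := fun k =>
    (Set.finite_le_nat k).eventually_all.mpr fun j _ => (hr j).eventually_ge_atTop k
  have hC_succ : ∀ k, C (k + 1) ⊆ C k := fun k n hn j hj =>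
    (Nat.cast_le.mpr k.le_succ).trans (hn j (hj.trans k.le_succ))
  obtain ⟨B, hB, hdiag⟩ := hsel C hC_succ hC
  refine ⟨B, hB, tendsto_atTop.mpr fun M => ?_⟩
  obtain ⟨k₀, hMk₀, hk₀B⟩ := (((eventually_ge_atTop ⌈M⌉₊).filter_mono hU).and hB).exists
  filter_upwards [hB, (eventually_gt_atTop k₀).filter_mono hU] with n hnB hk₀n
  obtain ⟨hφB, hφn⟩ := lastBelow_mem hk₀B hk₀n
  calc M ≤ k₀ := Nat.ceil_le.mp hMk₀
    _ ≤ lastBelow B n := Nat.cast_le.mpr (le_lastBelow hk₀B hk₀n)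
    _ ≤ r (lastBelow B n) n := hdiag _ hφB ⟨hnB, hφn⟩ _ le_rfl

section sliceRatio

variable {ι α : Type*}

/-- `|A(n)| / g(n)`, where `A(n) = {x | (n, x) ∈ A}` is the slice of `A` over `n`. -/
noncomputable def sliceRatio (g : ι → ℕ) (A : Set (ι × α)) (n : ι) : ℝ :=
  ({x | (n, x) ∈ A}.ncard : ℝ) / g n

variable {g : ι → ℕ} {A B : Set (ι × α)}

theorem sliceRatio_mono (hB : ∀ n, {x | (n, x) ∈ B}.Finite) (hAB : A ⊆ B) :
    sliceRatio g A ≤ sliceRatio g B := fun n =>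
  div_le_div_of_nonneg_right (Nat.cast_le.mpr (Set.ncard_le_ncard (fun _ hx => hAB hx) (hB n)))
    (Nat.cast_nonneg _)

theorem sliceRatio_union_le (A B : Set (ι × α)) (n : ι) :
    sliceRatio g (A ∪ B) n ≤ sliceRatio g A n + sliceRatio g B n := by
  rw [sliceRatio, sliceRatio, sliceRatio, ← add_div]
  exact div_le_div_of_nonneg_right (by exact_mod_cast Set.ncard_union_le _ _) (Nat.cast_nonneg _)

end sliceRatio

theorem IsSelective.exists_diagonalization {α : Type*} {U : Ultrafilter ℕ} (hsel : IsSelective U)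
    (hU : (U : Filter ℕ) ≤ atTop) {g : ℕ → ℕ} {A : ℕ → Set (ℕ × α)} (hA_anti : Antitone A)
    (hA : ∀ k, Tendsto (sliceRatio g (A k)) U atTop) :
    ∃ B ⊆ A 0, Tendsto (sliceRatio g B) U atTop ∧
      ∀ k : ℕ, (∃ x, (k, x) ∈ B) → {p ∈ B | k < p.1} ⊆ A k := by
  obtain ⟨B₀, hB₀, hlim⟩ := hsel.exists_tendsto_lastBelow hU hA
  refine ⟨{p | p.1 ∈ B₀ ∧ p ∈ A (lastBelow B₀ p.1)}, fun p hp => hA_anti (Nat.zero_le _) hp.2,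
    hlim.congr' ?_, ?_⟩
  · filter_upwards [hB₀] with n hn
    simp only [sliceRatio, Set.mem_ofPred_eq, hn, true_and]
  · rintro k ⟨x, hkB₀, -⟩ p ⟨⟨-, hp⟩, hkp⟩
    exact hA_anti (le_lastBelow hkB₀ hkp) hp

/-- Let `𝒰` be a nonprincipal selective ultrafilter on `ℕ`, `F n` nonempty finite
sets, `g ≥ 1` with `g(n)/|F(n)| → 0`. Then
`𝓗 = {A ⊆ ℕ(F) : lim_{n→𝒰} |A(n)|/g(n) = ∞}` is a nonempty selective coideal on
`ℕ(F) = {(n,x) : x ∈ F(n)}`. -/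
theorem stmt7 (U : Ultrafilter ℕ)
    (hnonpr : ∀ a : ℕ, U ≠ pure a)
    (hsel : ∀ A : ℕ → Set ℕ, (∀ k, A (k + 1) ⊆ A k) → (∀ k, A k ∈ U) →
      ∃ B ∈ U, ∀ k ∈ B, {n ∈ B | k < n} ⊆ A k)
    (F : ℕ → Finset ℕ) (hF : ∀ n, (F n).Nonempty)
    (g : ℕ → ℕ) (hg : ∀ n, 1 ≤ g n)
    (hlim : Filter.Tendsto (fun n => (g n : ℝ) / ((F n).card : ℝ))
      Filter.atTop (nhds 0)) :
    -- ℕ(F)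
    let NF : Set (ℕ × ℕ) := {p | p.2 ∈ F p.1}
    -- the coideal 𝓗 = 𝓗(𝒰, F, g)
    let H : Set (Set (ℕ × ℕ)) := {A | A ⊆ NF ∧
      Filter.Tendsto (fun n => (({x | (n, x) ∈ A}).ncard : ℝ) / (g n : ℝ))
        (U : Filter ℕ) Filter.atTop}
    -- 𝓗 is nonempty: ℕ(F) ∈ 𝓗
    NF ∈ H ∧
    -- 𝓗 is upward closed (among subsets of ℕ(F))
    (∀ A B : Set (ℕ × ℕ), A ∈ H → A ⊆ B → B ⊆ NF → B ∈ H) ∧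
    -- complement of an ideal: A ∪ B ∈ 𝓗 implies A ∈ 𝓗 or B ∈ 𝓗
    (∀ A B : Set (ℕ × ℕ), A ∪ B ∈ H → A ∈ H ∨ B ∈ H) ∧
    -- selectivity: every decreasing sequence in 𝓗 has a diagonalization in 𝓗
    (∀ A : ℕ → Set (ℕ × ℕ), (∀ k, A (k + 1) ⊆ A k) → (∀ k, A k ∈ H) →
      ∃ B ∈ H, ∀ k : ℕ, (∃ x, (k, x) ∈ B) → {p ∈ B | k < p.1} ⊆ A k) := by
  intro NF H
  have hU := Ultrafilter.le_atTop_of_forall_ne_pure hnonpr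
  have hfin : ∀ A ⊆ NF, ∀ n, {x | (n, x) ∈ A}.Finite := fun A hA n =>
    (F n).finite_toSet.subset fun _ hx => hA hx
  refine ⟨⟨subset_rfl, ?_⟩, fun A B hA hAB hBNF => ⟨hBNF, ?_⟩, fun A B hAB => ?_,
    fun A hA_succ hA => ?_⟩
  · have hpos : ∀ᶠ n in atTop, (0 : ℝ) < g n / (F n).card := Eventually.of_forall fun n =>
      div_pos (by exact_mod_cast hg n) (by exact_mod_cast (hF n).card_pos)
    simpa only [NF, Set.mem_ofPred_eq, Finset.setOfPred_mem, Set.ncard_coe_finset] using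
      (tendsto_div_atTop_of_tendsto_div_zero hpos hlim).mono_left hU
  · exact tendsto_atTop_mono (sliceRatio_mono (hfin B hBNF) hAB) hA.2
  · exact (U.tendsto_atTop_or_of_le_add (sliceRatio_union_le A B) hAB.2).imp
      (fun h => ⟨Set.subset_union_left.trans hAB.1, h⟩)
      (fun h => ⟨Set.subset_union_right.trans hAB.1, h⟩)
  · obtain ⟨B, hB, hlimB, hdiag⟩ := IsSelective.exists_diagonalization hsel hU
      (antitone_nat_of_succ_le hA_succ) fun k => (hA k).2
    exact ⟨B, ⟨hB.trans (hA 0).1, hlimB⟩, hdiag⟩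
end
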